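/- Let n ≥ 3 and 2 ≤ d ≤ n−1 be integers. There exists a constant C > 0 such that for every measurable function f : (0,∞) → [0,∞], sup_{s>0} ∫_s^∞ f(r) (1 − tanh²s/tanh²r)^{(d−2)/2} sinh^{d−1} r dr ≤ C ‖f‖_{L^{(n−1)/(d−1),1}((0,∞), sinh^{n−1} r dr)}; equivalently, sup_{s>0} cosh s · A_d⁻ f(s) ≤ C ‖f‖_{L^{(n−1)/(d−1),1}((0,∞), sinh^{n−1} r dr)}. -/

import Mathlib

/-!
Since `d ≥ 2`, the kernel `(1 - tanh² s / tanh² r) ^ ((d - 2) / 2)` is at most `1`, so the left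
side is bounded by `∫ f dν` for `ν = sinh^{d-1} r dr` on `(0, ∞)`. With `μ = sinh^{n-1} r dr`,
every set satisfies `ν(E) ≤ 2 μ(E)^{(d-1)/(n-1)}`: cut `E` at the radius `t` with
`sinh^{n-1} t = μ(E)`; below `t` the mass of `ν` is at most `sinh^{d-1} t` (compare `sinh^{d-1}`
with its derivative), and above `t` one has `sinh^{d-1} ≤ sinh^{n-1} / sinh^{n-d} t`. Applying
this to the level sets `{f > λ}` and integrating in `λ` (layer cake) gives the Lorentz norm bound
with `C = 2`.
-/

open MeasureTheory Set Real
open scoped ENNReal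

/-- The Lorentz `L^{p,1}` norm of `f` with respect to the measure `μ`:
`‖f‖_{L^{p,1}(μ)} = p ∫_0^∞ μ({x : f x > λ})^{1/p} dλ`. -/
noncomputable def lorentzNorm (μ : Measure ℝ) (p : ℝ) (f : ℝ → ℝ≥0∞) : ℝ≥0∞ :=
  ENNReal.ofReal p *
    ∫⁻ l in Set.Ioi (0 : ℝ), (μ {t | ENNReal.ofReal l < f t}) ^ (1 / p)

theorem Real.tanh_le_tanh {x y : ℝ} (h : x ≤ y) : tanh x ≤ tanh y := by
  rwa [← artanh_le_artanh_iff ⟨neg_one_lt_tanh x, tanh_lt_one x⟩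
    ⟨neg_one_lt_tanh y, tanh_lt_one y⟩, artanh_tanh, artanh_tanh]

theorem one_sub_tanh_sq_div_tanh_sq_rpow_le_one {s r e : ℝ} (hs : 0 ≤ s) (hsr : s ≤ r)
    (he : 0 ≤ e) : (1 - tanh s ^ 2 / tanh r ^ 2) ^ e ≤ 1 := by
  have hs0 : 0 ≤ tanh s := tanh_zero ▸ tanh_le_tanh hs
  have hsq : tanh s ^ 2 ≤ tanh r ^ 2 := pow_le_pow_left₀ hs0 (tanh_le_tanh hsr) 2
  refine rpow_le_one ?_ (by linarith [div_nonneg (sq_nonneg (tanh s)) (sq_nonneg (tanh r))]) he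
  exact sub_nonneg.2 (div_le_one_of_le₀ hsq (sq_nonneg _))

theorem volume_restrict_Ioi_ofReal_lt (c : ℝ≥0∞) :
    volume.restrict (Ioi 0) {l : ℝ | ENNReal.ofReal l < c} = c := by
  rw [Measure.restrict_apply' measurableSet_Ioi]
  rcases eq_or_ne c ⊤ with rfl | hc
  · simp
  · lift c to NNReal using hc
    have : {l : ℝ | ENNReal.ofReal l < c} ∩ Ioi 0 = Ioo 0 (c : ℝ) := by
      ext l
      simp +contextual [ENNReal.ofReal_lt_coe_iff, le_of_lt, and_comm]
    simp [this]

theorem lintegral_eq_lintegral_meas_ofReal_lt {α : Type*} [MeasurableSpace α] (ν : Measure α)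
    [SFinite ν] {f : α → ℝ≥0∞} (hf : Measurable f) :
    ∫⁻ x, f x ∂ν = ∫⁻ l in Ioi (0 : ℝ), ν {x | ENNReal.ofReal l < f x} := by
  set S := {p : α × ℝ | ENNReal.ofReal p.2 < f p.1}
  have hS : MeasurableSet S :=
    measurableSet_lt (ENNReal.measurable_ofReal.comp measurable_snd) (hf.comp measurable_fst)
  calc ∫⁻ x, f x ∂ν
      = ∫⁻ x, (∫⁻ l in Ioi (0 : ℝ), S.indicator 1 (x, l)) ∂ν := by
        refine lintegral_congr fun x => ?_
        rw [← volume_restrict_Ioi_ofReal_lt (f x),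
          ← lintegral_indicator_one (measurableSet_lt ENNReal.measurable_ofReal measurable_const)]
        rfl
    _ = ∫⁻ l in Ioi (0 : ℝ), ∫⁻ x, S.indicator 1 (x, l) ∂ν :=
        lintegral_lintegral_swap (by exact (measurable_one.indicator hS).aemeasurable)
    _ = ∫⁻ l in Ioi (0 : ℝ), ν {x | ENNReal.ofReal l < f x} := by
        refine lintegral_congr fun l => ?_
        rw [← lintegral_indicator_one (measurableSet_lt measurable_const hf)]
        rfl

theorem lintegral_le_mul_lorentzNorm {μ ν : Measure ℝ} [SFinite ν] {p : ℝ} (hp : 1 ≤ p)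
    {c : ℝ≥0∞} (hνμ : ∀ E, MeasurableSet E → ν E ≤ c * μ E ^ (1 / p)) {f : ℝ → ℝ≥0∞}
    (hf : Measurable f) : ∫⁻ x, f x ∂ν ≤ c * lorentzNorm μ p f :=
  calc ∫⁻ x, f x ∂ν = ∫⁻ l in Ioi (0 : ℝ), ν {x | ENNReal.ofReal l < f x} :=
        lintegral_eq_lintegral_meas_ofReal_lt ν hf
    _ ≤ ∫⁻ l in Ioi (0 : ℝ), c * μ {x | ENNReal.ofReal l < f x} ^ (1 / p) :=
        lintegral_mono fun l => hνμ _ (measurableSet_lt measurable_const hf)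
    _ = c * ∫⁻ l in Ioi (0 : ℝ), μ {x | ENNReal.ofReal l < f x} ^ (1 / p) := by
        refine lintegral_const_mul _ (Measurable.pow_const (Antitone.measurable ?_) _)
        exact fun a b hab => measure_mono fun x hx => (ENNReal.ofReal_le_ofReal hab).trans_lt hx
    _ ≤ c * lorentzNorm μ p f := by
        rw [lorentzNorm]
        gcongr
        exact le_mul_of_one_le_left' (ENNReal.one_le_ofReal.2 hp)

/-- For `k = n - 1`, the radial part of the volume of `ℍⁿ`. -/
noncomputable def sinhPowMeasure (k : ℕ) : Measure ℝ :=
  (volume.restrict (Ioi 0)).withDensity fun r => ENNReal.ofReal (sinh r ^ k)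

instance (k : ℕ) : SFinite (sinhPowMeasure k) := by
  rw [sinhPowMeasure]; infer_instance

theorem sinhPowMeasure_apply (k : ℕ) (E : Set ℝ) :
    sinhPowMeasure k E = ∫⁻ r in E ∩ Ioi 0, ENNReal.ofReal (sinh r ^ k) := by
  rw [sinhPowMeasure, withDensity_apply' _ E, Measure.restrict_restrict' measurableSet_Ioi]

theorem sinhPowMeasure_absolutelyContinuous (m k : ℕ) : sinhPowMeasure m ≪ sinhPowMeasure k :=
  (withDensity_absolutelyContinuous _ _).trans <| withDensity_absolutelyContinuous'
    (by fun_prop) <| (ae_restrict_iff' measurableSet_Ioi).2 <| ae_of_all _ fun r hr => by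
      simpa using pow_pos (sinh_pos_iff.2 hr) k

theorem sinhPowMeasure_Iic_le (m : ℕ) {t : ℝ} (ht : 0 ≤ t) :
    sinhPowMeasure (m + 1) (Iic t) ≤ ENNReal.ofReal (sinh t) ^ (m + 1) := by
  have hderiv : ∀ r ∈ Ioc 0 t, HasDerivWithinAt (fun r => sinh r ^ (m + 1))
      ((m + 1 : ℕ) * sinh r ^ m * cosh r) (Ioc 0 t) r := fun r _ => by
    simpa using ((hasDerivAt_sinh r).fun_pow (m + 1)).hasDerivWithinAt
  have hmono : MonotoneOn (fun r => sinh r ^ (m + 1)) (Ioc 0 t) := fun a ha b _ hab =>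
    pow_le_pow_left₀ (sinh_nonneg_iff.2 ha.1.le) (sinh_le_sinh.2 hab) _
  calc sinhPowMeasure (m + 1) (Iic t)
      = ∫⁻ r in Ioc 0 t, ENNReal.ofReal (sinh r ^ (m + 1)) := by
        rw [sinhPowMeasure_apply, Iic_inter_Ioi]
    _ ≤ ∫⁻ r in Ioc 0 t, ENNReal.ofReal ((m + 1 : ℕ) * sinh r ^ m * cosh r) := by
        refine setLIntegral_mono' measurableSet_Ioc fun r hr => ENNReal.ofReal_le_ofReal ?_
        have h0 : 0 ≤ sinh r := sinh_nonneg_iff.2 hr.1.le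
        calc sinh r ^ (m + 1) = 1 * sinh r ^ m * sinh r := by ring
          _ ≤ (m + 1 : ℕ) * sinh r ^ m * cosh r := by
            gcongr
            · exact_mod_cast Nat.le_add_left 1 m
            · exact (sinh_lt_cosh r).le
    _ = volume ((fun r => sinh r ^ (m + 1)) '' Ioc 0 t) :=
        lintegral_deriv_eq_volume_image_of_monotoneOn measurableSet_Ioc hderiv hmono
    _ ≤ volume (Icc 0 (sinh t ^ (m + 1))) := by
        refine measure_mono ?_
        rintro _ ⟨r, hr, rfl⟩
        exact ⟨pow_nonneg (sinh_nonneg_iff.2 hr.1.le) _,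
          hmono hr ⟨hr.1.trans_le hr.2, le_rfl⟩ hr.2⟩
    _ = ENNReal.ofReal (sinh t) ^ (m + 1) := by
        rw [Real.volume_Icc, sub_zero, ENNReal.ofReal_pow (sinh_nonneg_iff.2 ht)]

theorem ofReal_sinh_pow_mul_sinhPowMeasure_inter_Ioi_le {m k : ℕ} (hmk : m ≤ k) {t : ℝ}
    (ht : 0 ≤ t) (E : Set ℝ) :
    ENNReal.ofReal (sinh t) ^ (k - m) * sinhPowMeasure m (E ∩ Ioi t) ≤ sinhPowMeasure k E := by
  rw [sinhPowMeasure_apply, sinhPowMeasure_apply, ← lintegral_const_mul _ (by fun_prop)]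
  calc ∫⁻ r in E ∩ Ioi t ∩ Ioi 0,
        ENNReal.ofReal (sinh t) ^ (k - m) * ENNReal.ofReal (sinh r ^ m)
      ≤ ∫⁻ r in E ∩ Ioi t ∩ Ioi 0, ENNReal.ofReal (sinh r ^ k) := by
        refine setLIntegral_mono (by fun_prop) fun r hr => ?_
        have htr : sinh t ≤ sinh r := sinh_le_sinh.2 hr.1.2.le
        have ht0 : 0 ≤ sinh t := sinh_nonneg_iff.2 ht
        have hr0 : 0 ≤ sinh r := ht0.trans htr
        rw [← ENNReal.ofReal_pow ht0, ← ENNReal.ofReal_mul (by positivity),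
          ← pow_sub_mul_pow (sinh r) hmk]
        gcongr
    _ ≤ ∫⁻ r in E ∩ Ioi 0, ENNReal.ofReal (sinh r ^ k) :=
        lintegral_mono_set (inter_subset_inter_left _ inter_subset_left)

theorem sinhPowMeasure_le_two_mul_rpow {m k : ℕ} (hm : 1 ≤ m) (hmk : m ≤ k) (E : Set ℝ) :
    sinhPowMeasure m E ≤ 2 * sinhPowMeasure k E ^ ((m : ℝ) / k) := by
  set M := sinhPowMeasure k E
  have hk : (k : ℝ) ≠ 0 := by norm_cast; omega
  rcases eq_or_ne M 0 with hM0 | hM0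
  · simp [sinhPowMeasure_absolutelyContinuous m k hM0]
  rcases eq_or_ne M ⊤ with hMtop | hMtop
  · simp [hMtop, ENNReal.top_rpow_of_pos (by positivity : (0 : ℝ) < m / k)]
  set y := M ^ (1 / k : ℝ)
  have hy0 : y ≠ 0 := by simp [y, hM0, hMtop]
  have hytop : y ≠ ⊤ := by simp [y, hM0, hMtop]
  have hyk : y ^ k = M := by
    rw [← ENNReal.rpow_natCast, ← ENNReal.rpow_mul, one_div_mul_cancel hk, ENNReal.rpow_one]
  set t := arsinh y.toReal
  have ht : 0 ≤ t := arsinh_nonneg_iff.2 ENNReal.toReal_nonneg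
  have hsinh : ENNReal.ofReal (sinh t) = y := by rw [sinh_arsinh, ENNReal.ofReal_toReal hytop]
  obtain ⟨j, rfl⟩ : ∃ j, m = j + 1 := ⟨m - 1, by omega⟩
  have hsplit : y ^ (k - (j + 1)) * sinhPowMeasure (j + 1) E ≤
      y ^ (k - (j + 1)) * (2 * y ^ (j + 1)) :=
    calc y ^ (k - (j + 1)) * sinhPowMeasure (j + 1) E
        ≤ y ^ (k - (j + 1)) *
            (sinhPowMeasure (j + 1) (Iic t) + sinhPowMeasure (j + 1) (E ∩ Ioi t)) := by
          gcongr
          refine (measure_mono fun r hr => ?_).trans (measure_union_le (Iic t) (E ∩ Ioi t))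
          exact (le_or_gt r t).imp id (⟨hr, ·⟩)
      _ ≤ y ^ (k - (j + 1)) * y ^ (j + 1) + M := by
          rw [mul_add]
          gcongr
          · exact hsinh ▸ sinhPowMeasure_Iic_le j ht
          · exact hsinh ▸ ofReal_sinh_pow_mul_sinhPowMeasure_inter_Ioi_le hmk ht E
      _ = y ^ (k - (j + 1)) * (2 * y ^ (j + 1)) := by
          rw [← hyk, ← pow_sub_mul_pow y hmk]; ring
  calc sinhPowMeasure (j + 1) E ≤ 2 * y ^ (j + 1) :=
        (ENNReal.mul_le_mul_iff_right (pow_ne_zero _ hy0) (ENNReal.pow_ne_top hytop)).1 hsplit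
    _ = 2 * M ^ (((j + 1 : ℕ) : ℝ) / k) := by
        rw [← ENNReal.rpow_natCast, ← ENNReal.rpow_mul, one_div_mul_eq_div]

theorem setLIntegral_abel_le_lintegral_sinhPowMeasure {s e : ℝ} (hs : 0 ≤ s) (he : 0 ≤ e)
    (j : ℕ) (f : ℝ → ℝ≥0∞) :
    ∫⁻ r in Ioi s, f r * ENNReal.ofReal ((1 - tanh s ^ 2 / tanh r ^ 2) ^ e * sinh r ^ j) ≤
      ∫⁻ r, f r ∂sinhPowMeasure j := by
  rw [sinhPowMeasure, lintegral_withDensity_eq_lintegral_mul_non_measurable _ (by fun_prop)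
    (ae_of_all _ fun _ => ENNReal.ofReal_lt_top)]
  calc ∫⁻ r in Ioi s, f r * ENNReal.ofReal ((1 - tanh s ^ 2 / tanh r ^ 2) ^ e * sinh r ^ j)
      ≤ ∫⁻ r in Ioi s, f r * ENNReal.ofReal (sinh r ^ j) := by
        refine setLIntegral_mono_ae' measurableSet_Ioi (ae_of_all _ fun r hr => ?_)
        gcongr
        have : 0 ≤ sinh r ^ j := pow_nonneg (sinh_nonneg_iff.2 (hs.trans hr.le)) j
        exact mul_le_of_le_one_left this (one_sub_tanh_sq_div_tanh_sq_rpow_le_one hs hr.le he)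
    _ ≤ ∫⁻ r in Ioi 0, f r * ENNReal.ofReal (sinh r ^ j) := lintegral_mono_set (Ioi_subset_Ioi hs)
    _ = ∫⁻ r in Ioi 0, (fun r => ENNReal.ofReal (sinh r ^ j) * f r) r := by simp only [mul_comm]

theorem abel_hyperbolic_endpoint_general (n d : ℕ) (hd : 2 ≤ d) (hdn : d ≤ n - 1) :
    ∃ C : ℝ, 0 < C ∧ ∀ f : ℝ → ℝ≥0∞, Measurable f →
      ∀ s : ℝ, 0 < s →
        (∫⁻ r in Set.Ioi s,
            f r * ENNReal.ofReal
              ((1 - Real.tanh s ^ 2 / Real.tanh r ^ 2) ^ (((d : ℝ) - 2) / 2) *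
                Real.sinh r ^ (d - 1))) ≤
          ENNReal.ofReal C *
            lorentzNorm
              ((volume.restrict (Set.Ioi (0 : ℝ))).withDensity
                (fun r => ENNReal.ofReal (Real.sinh r ^ (n - 1))))
              (((n : ℝ) - 1) / ((d : ℝ) - 1)) f := by
  have hd' : (2 : ℝ) ≤ d := by exact_mod_cast hd
  have hdn' : (d : ℝ) + 1 ≤ n := by exact_mod_cast (by omega : d + 1 ≤ n)
  have hexp : 1 / (((n : ℝ) - 1) / ((d : ℝ) - 1)) = ((d - 1 : ℕ) : ℝ) / (n - 1 : ℕ) := by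
    rw [one_div_div, Nat.cast_sub (by omega), Nat.cast_sub (by omega), Nat.cast_one]
  refine ⟨2, two_pos, fun f hf s hs => ?_⟩
  calc _ ≤ ∫⁻ r, f r ∂sinhPowMeasure (d - 1) :=
        setLIntegral_abel_le_lintegral_sinhPowMeasure hs.le (by linarith) (d - 1) f
    _ ≤ 2 * lorentzNorm (sinhPowMeasure (n - 1)) (((n : ℝ) - 1) / ((d : ℝ) - 1)) f := by
        refine lintegral_le_mul_lorentzNorm ((one_le_div (by linarith)).2 (by linarith)) ?_ hf
        exact fun E _ => hexp ▸ sinhPowMeasure_le_two_mul_rpow (by omega) (by omega) E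
    _ = _ := by rw [ENNReal.ofReal_ofNat]; rfl

/-- Endpoint estimate for the Abel transform associated with the `d`-dimensional
totally geodesic Radon transform of radial functions on `ℍⁿ`: for `n ≥ 3`,
`2 ≤ d ≤ n−1` there is `C > 0` such that for all measurable `f : (0,∞) → [0,∞]`,
`sup_{s>0} cosh s · A_d⁻ f(s) = sup_{s>0} ∫_s^∞ f(r)(1 − tanh²s/tanh²r)^{(d−2)/2} sinh^{d−1} r dr
  ≤ C ‖f‖_{L^{(n−1)/(d−1),1}((0,∞), sinh^{n−1} r dr)}`. -/
theorem abel_hyperbolic_endpoint (n d : ℕ) (hn : 3 ≤ n) (hd : 2 ≤ d) (hdn : d ≤ n - 1) :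
    ∃ C : ℝ, 0 < C ∧ ∀ f : ℝ → ℝ≥0∞, Measurable f →
      ∀ s : ℝ, 0 < s →
        (∫⁻ r in Set.Ioi s,
            f r * ENNReal.ofReal
              ((1 - Real.tanh s ^ 2 / Real.tanh r ^ 2) ^ (((d : ℝ) - 2) / 2) *
                Real.sinh r ^ (d - 1))) ≤
          ENNReal.ofReal C *
            lorentzNorm
              ((volume.restrict (Set.Ioi (0 : ℝ))).withDensity
                (fun r => ENNReal.ofReal (Real.sinh r ^ (n - 1))))
              (((n : ℝ) - 1) / ((d : ℝ) - 1)) f :=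
  abel_hyperbolic_endpoint_general n d hd hdn
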